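/- Fix integers M ≥ N ≥ 1, parameters t, α₁,…,α_M, γ₁,…,γ_M ∈ ℂ, an element s ∈ ℂ with s² = −t, and integers 1 ≤ x₁ < ⋯ < x_N = M. For nonzero z₁,…,z_N ∈ ℂ with z_j² ≠ 1 for all j, z_j z_k ≠ 1 and z_j ≠ z_k for all j < k, and fixed w₁,…,w_N ∈ ℂ with w_j² = z_j, define F^{II}_{M,N}(z₁,…,z_N; γ₁,…,γ_M; x₁,…,x_N) = [ ∏_{j=1}^{N} w_j(1−s z_j) ∏_{1≤j<k≤N}(1+tz_jz_k)(1+tz_jz_k^{-1}) ] / [ (−1)^N ∏_{j=1}^{N}(1−z_j²) ∏_{1≤j<k≤N}(1−z_jz_k)(z_jz_k^{-1}−1) ] × Σ_{σ ∈ S_N} Σ_{τ ∈ {±1}^N} sgn(σ) (−1)^{#{j : τ_j = −1}} ∏_{j=1}^{N} ( z_{σ(j)}^{τ_{σ(j)}} + s ) · ∏_{j=1}^{N} [ ∏_{k=1}^{x_j-1}(α_k + (1-α_kγ_k) z_{σ(j)}^{τ_{σ(j)}}) ] [ ∏_{k=x_j+1}^{M}(1 − γ_k z_{σ(j)}^{τ_{σ(j)}})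 ] [ ∏_{k=1}^{M}(1 − γ_k z_{σ(j)}^{-τ_{σ(j)}}) ]. Then, with γ_M specialized to γ_M = z_N, F^{II}_{M,N}(z₁,…,z_N; γ₁,…,γ_{M-1}, z_N; x₁,…,x_N) = w_N^{-1} · ∏_{j=1}^{N}(t z_N z_j + 1) · ∏_{j=1}^{N-1}(t + z_N z_j^{-1}) · ∏_{j=1}^{M-1}((1-α_jγ_j) z_N^{-1} + α_j) · ∏_{j=1}^{M-1}(1 − γ_j z_N) · F^{II}_{M-1,N-1}(z₁,…,z_{N-1}; γ₁,…,γ_{M-1}; x₁,…,x_{N-1}), where F^{II}_{M-1,0} is interpreted as 1 (using the same w_j for j ≤ N-1). -/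

import Mathlib

/-!
Write `F^{II}_{M,N}` as the type II prefactor times a signed sum over the hyperoctahedral group
`S_N ⋉ {±1}^N` of products of one-variable weights `f_j(z_{σ(j)}^{τ_{σ(j)}})`. Once `γ_M = z_N`,
every weight contains the factor `1 - z_N u⁻¹`, and every weight at a position `x_j < M` the
factor `1 - z_N u`. So only the terms with `τ_N = -1` and `σ(N) = N` survive, and each of them is
the corresponding term for `N - 1` variables times the last weight at `u = z_N⁻¹` and the factors
`(1 - z_N u)(1 - z_N u⁻¹)` at `u = z_j^{±1}`; these are invariant under `u ↦ u⁻¹`, so they leave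
the sum. What remains is an identity between the two prefactors, which uses `s² = -t` and
`w_N² = z_N`.
-/

open Finset

/-- The explicit sum formula `F^{II}_{M,N}` (equation (95) of the paper): the product of the
type II prefactor and the generalized Bump–Friedberg–Hoffstein Whittaker function `o^+_λ`
with `λ_j = x_{N-j+1} - N + j - 1`.  Here `s` plays the role of `√(-t)` and `w j` that of
`z_j^{1/2}`.  Variables `z`, square roots `w` and particle positions `x` are 0-indexed;
parameter families `α, γ` are functions on `ℕ` (indices `1,…,M` are used).  The sign choice
`τ` is encoded by booleans: `τ j = true` stands for `τ_j = +1`, `τ j = false` for `τ_j = -1`. -/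
noncomputable def FII (M : ℕ) (t s : ℂ) (α γ : ℕ → ℂ) {N : ℕ} (x : Fin N → ℕ)
    (z w : Fin N → ℂ) : ℂ :=
  ((∏ j, w j * (1 - s * z j)) *
      ∏ j, ∏ k ∈ Ioi j, (1 + t * z j * z k) * (1 + t * z j * (z k)⁻¹)) /
  ((-1 : ℂ) ^ N * (∏ j, (1 - z j ^ 2)) *
      ∏ j, ∏ k ∈ Ioi j, (1 - z j * z k) * (z j * (z k)⁻¹ - 1)) *
  ∑ σ : Equiv.Perm (Fin N), ∑ τ : Fin N → Bool,
    ((Equiv.Perm.sign σ : ℤ) : ℂ) *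
    (-1 : ℂ) ^ (Finset.univ.filter (fun j => τ j = false)).card *
    (∏ j, ((if τ (σ j) then z (σ j) else (z (σ j))⁻¹) + s)) *
    ∏ j,
      ((∏ k ∈ Finset.Icc 1 (x j - 1),
          (α k + (1 - α k * γ k) * (if τ (σ j) then z (σ j) else (z (σ j))⁻¹))) *
       (∏ k ∈ Finset.Icc (x j + 1) M,
          (1 - γ k * (if τ (σ j) then z (σ j) else (z (σ j))⁻¹))) *
       (∏ k ∈ Finset.Icc 1 M,
          (1 - γ k * (if τ (σ j) then (z (σ j))⁻¹ else z (σ j)))))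

open Equiv

theorem Fin.prod_Ioi_castSucc {β : Type*} [CommMonoid β] {n : ℕ} (g : Fin (n + 1) → β)
    (j : Fin n) : ∏ k ∈ Ioi j.castSucc, g k = (∏ k ∈ Ioi j, g k.castSucc) * g (Fin.last n) := by
  simp only [← filter_lt_eq_Ioi, prod_filter, Fin.prod_univ_castSucc, Fin.castSucc_lt_castSucc_iff,
    Fin.castSucc_lt_last, if_true]

theorem Fin.prod_prod_Ioi_castSucc {β : Type*} [CommMonoid β] {n : ℕ}
    (g : Fin (n + 1) → Fin (n + 1) → β) :
    ∏ j, ∏ k ∈ Ioi j, g j k =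
      (∏ j : Fin n, ∏ k ∈ Ioi j, g j.castSucc k.castSucc) * ∏ j : Fin n, g j.castSucc (last n) := by
  rw [Fin.prod_univ_castSucc, Ioi_eq_empty.mpr fun k _ => Fin.le_last k, prod_empty, mul_one,
    ← prod_mul_distrib]
  exact prod_congr rfl fun j _ => Fin.prod_Ioi_castSucc (g j.castSucc) j

theorem Fin.sum_pi_bool_eq_sum_snoc_false {M : Type*} [AddCommMonoid M] {n : ℕ}
    (g : (Fin (n + 1) → Bool) → M) (h : ∀ τ, τ (last n) = true → g τ = 0) :
    ∑ τ, g τ = ∑ τ : Fin n → Bool, g (Fin.snoc τ false) := by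
  rw [← (Fin.snocEquiv fun _ => Bool).sum_comp, Fintype.sum_prod_type, Fintype.sum_bool,
    sum_eq_zero fun τ _ => h _ (by simp), zero_add]
  rfl

theorem Fin.card_filter_snoc_false {n : ℕ} (τ : Fin n → Bool) :
    #{j | (Fin.snoc τ false : Fin (n + 1) → Bool) j = false} = #{j | τ j = false} + 1 := by
  rw [card_filter, card_filter, Fin.sum_univ_castSucc]
  simp

def Equiv.Perm.extendLast {n : ℕ} (σ : Perm (Fin n)) : Perm (Fin (n + 1)) :=
  finSuccEquivLast.symm.permCongr (Perm.decomposeOption.symm (none, σ))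

@[simp] theorem Equiv.Perm.extendLast_castSucc {n : ℕ} (σ : Perm (Fin n)) (j : Fin n) :
    σ.extendLast j.castSucc = (σ j).castSucc := by
  simp [extendLast, permCongr_apply]

@[simp] theorem Equiv.Perm.extendLast_last {n : ℕ} (σ : Perm (Fin n)) :
    σ.extendLast (Fin.last n) = Fin.last n := by
  simp [extendLast, permCongr_apply]

@[simp] theorem Equiv.Perm.sign_extendLast {n : ℕ} (σ : Perm (Fin n)) :
    sign σ.extendLast = sign σ := by
  simp [extendLast]

theorem Equiv.Perm.sum_eq_sum_extendLast {M : Type*} [AddCommMonoid M] {n : ℕ}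
    (F : Perm (Fin (n + 1)) → M) (h : ∀ σ, σ (Fin.last n) ≠ Fin.last n → F σ = 0) :
    ∑ σ, F σ = ∑ σ : Perm (Fin n), F σ.extendLast := by
  rw [← (finSuccEquivLast.symm.permCongr).sum_comp, ← Perm.decomposeOption.symm.sum_comp,
    Fintype.sum_prod_type, Fintype.sum_option, sum_eq_zero fun p _ => sum_eq_zero fun σ _ => h _ ?_,
    add_zero]
  · rfl
  · simp [permCongr_apply]

section Hyperoctahedral

variable {K : Type*} [Field K] {N : ℕ}

def hyperoctahedralTerm (f : Fin N → K → K) (z : Fin N → K) (σ : Perm (Fin N))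
    (τ : Fin N → Bool) : K :=
  ((Perm.sign σ : ℤ) : K) * (-1 : K) ^ #{j | τ j = false} *
    ∏ j, f j (if τ (σ j) then z (σ j) else (z (σ j))⁻¹)

def hyperoctahedralSum (f : Fin N → K → K) (z : Fin N → K) : K :=
  ∑ σ : Perm (Fin N), ∑ τ : Fin N → Bool, hyperoctahedralTerm f z σ τ

theorem hyperoctahedralTerm_eq_zero_of_apply_eq_zero {f : Fin N → K → K} {z : Fin N → K}
    {σ : Perm (Fin N)} {τ : Fin N → Bool} (j : Fin N)
    (h : f j (if τ (σ j) then z (σ j) else (z (σ j))⁻¹) = 0) :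
    hyperoctahedralTerm f z σ τ = 0 :=
  mul_eq_zero_of_right _ (prod_eq_zero (mem_univ j) h)

theorem hyperoctahedralTerm_extendLast_snoc_false {n : ℕ} (f : Fin (n + 1) → K → K)
    (z : Fin (n + 1) → K) (σ : Perm (Fin n)) (τ : Fin n → Bool) :
    hyperoctahedralTerm f z σ.extendLast (Fin.snoc τ false) =
      -f (Fin.last n) (z (Fin.last n))⁻¹ *
        hyperoctahedralTerm (fun j => f j.castSucc) (fun j => z j.castSucc) σ τ := by
  simp only [hyperoctahedralTerm, Perm.sign_extendLast, Fin.card_filter_snoc_false,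
    Fin.prod_univ_castSucc, Perm.extendLast_castSucc, Perm.extendLast_last, Fin.snoc_castSucc,
    Fin.snoc_last, Bool.false_eq_true, if_false]
  ring

theorem hyperoctahedralSum_eq_of_apply_last_eq_zero {n : ℕ} {f : Fin (n + 1) → K → K}
    {z : Fin (n + 1) → K} (h_pos : ∀ j, f j (z (Fin.last n)) = 0)
    (h_neg : ∀ j : Fin n, f j.castSucc (z (Fin.last n))⁻¹ = 0) :
    hyperoctahedralSum f z =
      -f (Fin.last n) (z (Fin.last n))⁻¹ *
        hyperoctahedralSum (fun j => f j.castSucc) (fun j => z j.castSucc) := by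
  have last_pos : ∀ σ τ, τ (Fin.last n) = true → hyperoctahedralTerm f z σ τ = 0 :=
    fun σ τ hτ => hyperoctahedralTerm_eq_zero_of_apply_eq_zero (σ.symm (Fin.last n))
      (by simp [hτ, h_pos])
  have last_moved : ∀ (τ : Fin n → Bool) (σ : Perm (Fin (n + 1))), σ (Fin.last n) ≠ Fin.last n →
      hyperoctahedralTerm f z σ (Fin.snoc τ false) = 0 := by
    intro τ σ hσ
    obtain ⟨j, hj⟩ : ∃ j : Fin n, j.castSucc = σ.symm (Fin.last n) :=
      Fin.exists_castSucc_eq.mpr fun h => hσ (σ.symm_apply_eq.mp h).symm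
    have hσj : σ j.castSucc = Fin.last n := by rw [hj, Equiv.apply_symm_apply]
    exact hyperoctahedralTerm_eq_zero_of_apply_eq_zero j.castSucc (by simp [hσj, h_neg])
  calc hyperoctahedralSum f z
      = ∑ τ : Fin n → Bool, ∑ σ, hyperoctahedralTerm f z σ (Fin.snoc τ false) := by
        rw [hyperoctahedralSum, sum_comm]
        exact Fin.sum_pi_bool_eq_sum_snoc_false _ fun τ hτ =>
          sum_eq_zero fun σ _ => last_pos σ τ hτ
    _ = ∑ τ : Fin n → Bool, ∑ σ : Perm (Fin n),
          hyperoctahedralTerm f z σ.extendLast (Fin.snoc τ false) :=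
        sum_congr rfl fun τ _ => Perm.sum_eq_sum_extendLast _ (last_moved τ)
    _ = _ := by
        simp only [hyperoctahedralTerm_extendLast_snoc_false, ← mul_sum, hyperoctahedralSum]
        rw [sum_comm]

theorem hyperoctahedralSum_mul_of_inv_invariant (f : Fin N → K → K) (z : Fin N → K)
    (c : K → K) (hc : ∀ i, c (z i)⁻¹ = c (z i)) :
    hyperoctahedralSum (fun j u => f j u * c u) z = (∏ i, c (z i)) * hyperoctahedralSum f z := by
  simp only [hyperoctahedralSum, mul_sum]
  refine sum_congr rfl fun σ _ => sum_congr rfl fun τ _ => ?_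
  have hcσ : ∀ j, c (if τ (σ j) then z (σ j) else (z (σ j))⁻¹) = c (z (σ j)) := fun j => by
    split_ifs <;> simp [hc]
  simp only [hyperoctahedralTerm, prod_mul_distrib, hcσ, Equiv.prod_comp σ (fun i => c (z i))]
  ring

end Hyperoctahedral

section TypeII

variable {K : Type*} [Field K]

def siteWeight (M : ℕ) (α γ : ℕ → K) (X : ℕ) (u : K) : K :=
  (∏ k ∈ Icc 1 (X - 1), (α k + (1 - α k * γ k) * u)) * (∏ k ∈ Icc (X + 1) M, (1 - γ k * u)) *
    ∏ k ∈ Icc 1 M, (1 - γ k * u⁻¹)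

theorem siteWeight_congr {M X : ℕ} (hX : X ≤ M + 1) (α : ℕ → K) {γ γ' : ℕ → K}
    (h : ∀ k ∈ Icc 1 M, γ k = γ' k) (u : K) :
    siteWeight M α γ X u = siteWeight M α γ' X u := by
  unfold siteWeight
  refine congr_arg₂ _ (congr_arg₂ _ ?_ ?_) ?_ <;> refine prod_congr rfl fun k hk => ?_ <;>
    rw [h k (by simp only [mem_Icc] at hk ⊢; omega)]

theorem siteWeight_succ_of_le {m X : ℕ} (hX : X ≤ m) (α γ : ℕ → K) (u : K) :
    siteWeight (m + 1) α γ X u =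
      siteWeight m α γ X u * ((1 - γ (m + 1) * u) * (1 - γ (m + 1) * u⁻¹)) := by
  simp only [siteWeight, prod_Icc_succ_top (by omega : X + 1 ≤ m + 1),
    prod_Icc_succ_top (by omega : 1 ≤ m + 1)]
  ring

theorem siteWeight_succ_succ (m : ℕ) (α γ : ℕ → K) (u : K) :
    siteWeight (m + 1) α γ (m + 1) u = siteWeight m α γ (m + 1) u * (1 - γ (m + 1) * u⁻¹) := by
  simp only [siteWeight, prod_Icc_succ_top (by omega : 1 ≤ m + 1), prod_empty,
    Icc_eq_empty_of_lt (by omega : m + 1 + 1 > m + 1),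
    Icc_eq_empty_of_lt (by omega : m + 1 + 1 > m)]
  ring

theorem siteWeight_self_succ (m : ℕ) (α γ : ℕ → K) (u : K) :
    siteWeight m α γ (m + 1) u =
      (∏ k ∈ Icc 1 m, ((1 - α k * γ k) * u + α k)) * ∏ k ∈ Icc 1 m, (1 - γ k * u⁻¹) := by
  rw [siteWeight, add_tsub_cancel_right, Icc_eq_empty_of_lt (by omega : m + 1 + 1 > m),
    prod_empty, mul_one]
  simp only [add_comm]

theorem siteWeight_eq_zero_of_mul_inv_eq_one {M X k : ℕ} (hk : k ∈ Icc 1 M) (α γ : ℕ → K)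
    {u : K} (h : γ k * u⁻¹ = 1) : siteWeight M α γ X u = 0 :=
  mul_eq_zero_of_right _ (prod_eq_zero hk (by rw [h, sub_self]))

theorem siteWeight_update_of_le {m X : ℕ} (hX : X ≤ m) (α γ : ℕ → K) (ζ u : K) :
    siteWeight (m + 1) α (Function.update γ (m + 1) ζ) X u =
      siteWeight m α γ X u * ((1 - ζ * u) * (1 - ζ * u⁻¹)) := by
  rw [siteWeight_succ_of_le hX, Function.update_self,
    siteWeight_congr (by omega) α fun k hk => Function.update_of_ne (by grind) _ _]

theorem siteWeight_update_succ (m : ℕ) (α γ : ℕ → K) (ζ u : K) :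
    siteWeight (m + 1) α (Function.update γ (m + 1) ζ) (m + 1) u =
      (∏ k ∈ Icc 1 m, ((1 - α k * γ k) * u + α k)) * (∏ k ∈ Icc 1 m, (1 - γ k * u⁻¹)) *
        (1 - ζ * u⁻¹) := by
  rw [siteWeight_succ_succ, Function.update_self,
    siteWeight_congr le_rfl α fun k hk => Function.update_of_ne (by grind) _ _,
    siteWeight_self_succ]

theorem siteWeight_update_self {ζ : K} (hζ : ζ ≠ 0) (m X : ℕ) (α γ : ℕ → K) :
    siteWeight (m + 1) α (Function.update γ (m + 1) ζ) X ζ = 0 :=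
  siteWeight_eq_zero_of_mul_inv_eq_one (k := m + 1) (by simp) _ _ (by simp [hζ])

def typeIIPrefactor {N : ℕ} (t s : K) (z w : Fin N → K) : K :=
  ((∏ j, w j * (1 - s * z j)) * ∏ j, ∏ k ∈ Ioi j, (1 + t * z j * z k) * (1 + t * z j * (z k)⁻¹)) /
    ((-1 : K) ^ N * (∏ j, (1 - z j ^ 2)) *
      ∏ j, ∏ k ∈ Ioi j, (1 - z j * z k) * (z j * (z k)⁻¹ - 1))

theorem typeIIPrefactor_succ {n : ℕ} (t s : K) (z w : Fin (n + 1) → K) :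
    typeIIPrefactor t s z w =
      typeIIPrefactor t s (fun j => z j.castSucc) (fun j => w j.castSucc) *
        ((w (Fin.last n) * (1 - s * z (Fin.last n)) *
            ∏ j : Fin n, (1 + t * z j.castSucc * z (Fin.last n)) *
              (1 + t * z j.castSucc * (z (Fin.last n))⁻¹)) /
          (-(1 - z (Fin.last n) ^ 2) *
            ∏ j : Fin n, (1 - z j.castSucc * z (Fin.last n)) *
              (z j.castSucc * (z (Fin.last n))⁻¹ - 1))) := by
  rw [typeIIPrefactor, typeIIPrefactor, Fin.prod_prod_Ioi_castSucc, Fin.prod_prod_Ioi_castSucc,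
    Fin.prod_univ_castSucc, Fin.prod_univ_castSucc, pow_succ, div_mul_div_comm]
  congr 1 <;> ring

theorem typeIIPrefactor_succ_mul {n : ℕ} {t s : K} (hs : s ^ 2 = -t)
    {z w : Fin (n + 1) → K} (hw : w (Fin.last n) ^ 2 = z (Fin.last n)) (hz0 : ∀ j, z j ≠ 0)
    (hz1 : z (Fin.last n) ^ 2 ≠ 1) (hzz : ∀ j : Fin n, z j.castSucc * z (Fin.last n) ≠ 1)
    (hzne : ∀ j : Fin n, z j.castSucc ≠ z (Fin.last n)) :
    typeIIPrefactor t s z w * -(((z (Fin.last n))⁻¹ + s) * (1 - z (Fin.last n) * z (Fin.last n))) *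
        ∏ j : Fin n, (1 - z (Fin.last n) * z j.castSucc) * (1 - z (Fin.last n) * (z j.castSucc)⁻¹) =
      (w (Fin.last n))⁻¹ * (∏ j, (t * z (Fin.last n) * z j + 1)) *
        (∏ j : Fin n, (t + z (Fin.last n) * (z j.castSucc)⁻¹)) *
        typeIIPrefactor t s (fun j => z j.castSucc) (fun j => w j.castSucc) := by
  rw [typeIIPrefactor_succ, Fin.prod_univ_castSucc (f := fun j => t * z (Fin.last n) * z j + 1)]
  set ζ := z (Fin.last n)
  have hζ : ζ ≠ 0 := hz0 _
  have hpair : (∏ j : Fin n, (1 + t * z j.castSucc * ζ) * (1 + t * z j.castSucc * ζ⁻¹)) *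
        ∏ j : Fin n, (1 - ζ * z j.castSucc) * (1 - ζ * (z j.castSucc)⁻¹) =
      (∏ j : Fin n, (t * ζ * z j.castSucc + 1)) * (∏ j : Fin n, (t + ζ * (z j.castSucc)⁻¹)) *
        ∏ j : Fin n, (1 - z j.castSucc * ζ) * (z j.castSucc * ζ⁻¹ - 1) := by
    simp only [← prod_mul_distrib]
    refine prod_congr rfl fun j _ => ?_
    have := hz0 j.castSucc
    field_simp
    ring
  have hlast : w (Fin.last n) * (1 - s * ζ) * (ζ⁻¹ + s) = (w (Fin.last n))⁻¹ * (t * ζ * ζ + 1) := by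
    have hw0 : w (Fin.last n) ≠ 0 := by rintro h; simp [h, eq_comm, hζ] at hw
    field_simp
    linear_combination (1 - s ^ 2 * ζ ^ 2) * hw - ζ ^ 3 * hs
  have hQ : ∏ j : Fin n, (1 - z j.castSucc * ζ) * (z j.castSucc * ζ⁻¹ - 1) ≠ 0 :=
    prod_ne_zero_iff.mpr fun j _ => mul_ne_zero (sub_ne_zero.mpr (hzz j).symm)
      (sub_ne_zero.mpr fun h => hzne j ((mul_inv_eq_one₀ hζ).mp h))
  have h1 : 1 - ζ ^ 2 ≠ 0 := sub_ne_zero.mpr hz1.symm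
  generalize ∏ j : Fin n, (1 + t * z j.castSucc * ζ) * (1 + t * z j.castSucc * ζ⁻¹) = A at hpair ⊢
  generalize ∏ j : Fin n, (1 - ζ * z j.castSucc) * (1 - ζ * (z j.castSucc)⁻¹) = B at hpair ⊢
  generalize ∏ j : Fin n, (1 - z j.castSucc * ζ) * (z j.castSucc * ζ⁻¹ - 1) = Q at hpair hQ ⊢
  calc _ = typeIIPrefactor t s (fun j => z j.castSucc) (fun j => w j.castSucc) *
          (w (Fin.last n) * (1 - s * ζ) * (ζ⁻¹ + s)) * (A * B) / Q := by
        field_simp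
    _ = _ := by
        rw [hlast, hpair]
        field_simp

end TypeII

theorem FII_eq_typeIIPrefactor_mul (M : ℕ) (t s : ℂ) (α γ : ℕ → ℂ) {N : ℕ} (x : Fin N → ℕ)
    (z w : Fin N → ℂ) :
    FII M t s α γ x z w =
      typeIIPrefactor t s z w *
        hyperoctahedralSum (fun j u => (u + s) * siteWeight M α γ (x j) u) z := by
  unfold FII typeIIPrefactor hyperoctahedralSum hyperoctahedralTerm siteWeight
  congr 1
  refine sum_congr rfl fun σ _ => sum_congr rfl fun τ _ => ?_
  rw [mul_assoc, ← prod_mul_distrib]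
  congr 3 with j
  cases τ (σ j) <;> simp

theorem FII_IzerginKorepin_recursion_general (m n : ℕ) (t s : ℂ) (hs : s ^ 2 = -t)
    (α γ : ℕ → ℂ)
    (x : Fin (n + 1) → ℕ) (hx : StrictMono x)
    (hxM : x (Fin.last n) = m + 1)
    (z w : Fin (n + 1) → ℂ) (hz0 : ∀ j, z j ≠ 0) (hz1 : ∀ j, z j ^ 2 ≠ 1)
    (hzz : ∀ j k, j < k → z j * z k ≠ 1) (hzne : ∀ j k, j < k → z j ≠ z k)
    (hw : ∀ j, w j ^ 2 = z j) :
    FII (m + 1) t s α (Function.update γ (m + 1) (z (Fin.last n))) x z w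
      = (w (Fin.last n))⁻¹ *
        (∏ j, (t * z (Fin.last n) * z j + 1)) *
        (∏ j : Fin n, (t + z (Fin.last n) * (z j.castSucc)⁻¹)) *
        (∏ j ∈ Finset.Icc 1 m, ((1 - α j * γ j) * (z (Fin.last n))⁻¹ + α j)) *
        (∏ j ∈ Finset.Icc 1 m, (1 - γ j * z (Fin.last n))) *
        FII m t s α γ (fun j : Fin n => x j.castSucc) (fun j : Fin n => z j.castSucc)
          (fun j : Fin n => w j.castSucc) := by
  set ζ := z (Fin.last n)
  have hζ : ζ ≠ 0 := hz0 _
  have hx_le (j : Fin n) : x j.castSucc ≤ m := by have := hx (Fin.castSucc_lt_last j); omega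
  have h_init : (fun (j : Fin n) u => (u + s) *
        siteWeight (m + 1) α (Function.update γ (m + 1) ζ) (x j.castSucc) u) =
      fun j u => (u + s) * siteWeight m α γ (x j.castSucc) u * ((1 - ζ * u) * (1 - ζ * u⁻¹)) := by
    ext j u
    rw [siteWeight_update_of_le (hx_le j), mul_assoc]
  rw [FII_eq_typeIIPrefactor_mul, FII_eq_typeIIPrefactor_mul,
    hyperoctahedralSum_eq_of_apply_last_eq_zero
      (fun j => by rw [siteWeight_update_self hζ, mul_zero])
      (fun j => by rw [siteWeight_update_of_le (hx_le j), mul_inv_cancel₀ hζ]; ring),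
    h_init, hyperoctahedralSum_mul_of_inv_invariant _ _ _ (fun i => by rw [inv_inv]; ring), hxM,
    siteWeight_update_succ, inv_inv]
  linear_combination
    (∏ k ∈ Icc 1 m, ((1 - α k * γ k) * ζ⁻¹ + α k)) * (∏ k ∈ Icc 1 m, (1 - γ k * ζ)) *
      hyperoctahedralSum (fun j u => (u + s) * siteWeight m α γ (x j.castSucc) u)
        (fun j => z j.castSucc) *
      typeIIPrefactor_succ_mul hs (hw _) hz0 (hz1 _)
        (fun j => hzz _ _ (Fin.castSucc_lt_last j)) (fun j => hzne _ _ (Fin.castSucc_lt_last j))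

/-- Izergin–Korepin recursion, Property (3) for `x_N = M`, in the proof of
Theorem 6.5: the specialization `γ_M = z_N` of `F^{II}_{M,N}` factorizes through
`F^{II}_{M-1,N-1}`.  Here `M = m+1`, `N = n+1`, so `F^{II}_{M-1,N-1}` is `FII m` on the
first `n` variables/positions (interpreted as `1` when `n = 0`, with the same `w_j`). -/
theorem FII_IzerginKorepin_recursion (m n : ℕ) (hmn : n ≤ m) (t s : ℂ) (hs : s ^ 2 = -t)
    (α γ : ℕ → ℂ)
    (x : Fin (n + 1) → ℕ) (hx : StrictMono x) (hx1 : ∀ j, 1 ≤ x j)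
    (hxM : x (Fin.last n) = m + 1)
    (z w : Fin (n + 1) → ℂ) (hz0 : ∀ j, z j ≠ 0) (hz1 : ∀ j, z j ^ 2 ≠ 1)
    (hzz : ∀ j k, j < k → z j * z k ≠ 1) (hzne : ∀ j k, j < k → z j ≠ z k)
    (hw : ∀ j, w j ^ 2 = z j) :
    FII (m + 1) t s α (Function.update γ (m + 1) (z (Fin.last n))) x z w
      = (w (Fin.last n))⁻¹ *
        (∏ j, (t * z (Fin.last n) * z j + 1)) *
        (∏ j : Fin n, (t + z (Fin.last n) * (z j.castSucc)⁻¹)) *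
        (∏ j ∈ Finset.Icc 1 m, ((1 - α j * γ j) * (z (Fin.last n))⁻¹ + α j)) *
        (∏ j ∈ Finset.Icc 1 m, (1 - γ j * z (Fin.last n))) *
        FII m t s α γ (fun j : Fin n => x j.castSucc) (fun j : Fin n => z j.castSucc)
          (fun j : Fin n => w j.castSucc) :=
  FII_IzerginKorepin_recursion_general m n t s hs α γ x hx hxM z w hz0 hz1 hzz hzne hw
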